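/- arXiv:1104.3533 — 2 statements merged into one kernel-verified Lean document; each statement's English description precedes it below -/
import Mathlib

section
/- For every k ∈ ℤ, γ_k = U_k(a)·γ + U_{k−1}(a)·δ and δ_k = U_{k−1}(a)·γ + U_k(a)·δ. -/
variable {V : Type*} [AddCommGroup V] [Module ℝ V]

/-- The reflection `s_μ` in a unit vector `μ`, acting by `s_μ(v) = v - 2 B(v,μ) μ`. -/
def reflVec (BF : LinearMap.BilinForm ℝ V) (μ v : V) : V :=
  v - (2 * BF v μ) • μ

/-
Both `k ↦ (γ_k, δ_k)` and `k ↦ (U_k(a) γ + U_{k-1}(a) δ, U_{k-1}(a) γ + U_k(a) δ)` solve the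
recursion `γ_{i+1} = s_γ(δ_i)`, `δ_{i+1} = s_δ(γ_i)` with the same value at `1`: for the second
this is the three-term recurrence of `U`, since `s_γ` and `s_δ` act on `span {γ, δ}` through
`a = -B(γ,δ)` alone. Reflections are involutions, so the recursion can be run backwards as well
as forwards, and a solution on all of `ℤ` is determined by its value at `1`.
-/

theorem reflVec_involutive {BF : LinearMap.BilinForm ℝ V} {μ : V} (hμ : BF μ μ = 1) :
    Function.Involutive (reflVec BF μ) := by
  intro v
  simp only [reflVec, map_sub, map_smul, LinearMap.sub_apply, LinearMap.smul_apply,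
    smul_eq_mul, hμ]
  module

theorem reflVec_smul_add_smul {BF : LinearMap.BilinForm ℝ V} {γ δ : V} {a : ℝ}
    (hγ : BF γ γ = 1) (hδγ : BF δ γ = -a) (p q : ℝ) :
    reflVec BF γ (p • γ + q • δ) = (2 * a * q - p) • γ + q • δ := by
  simp only [reflVec, map_add, map_smul, LinearMap.add_apply, LinearMap.smul_apply,
    smul_eq_mul, hγ, hδγ]
  module

theorem alternating_recursion_unique {α : Type*} {f g : α → α}
    (hf : Function.Injective f) (hg : Function.Injective g) {x y x' y' : ℤ → α}
    (hx : ∀ i, x (i + 1) = f (y i)) (hy : ∀ i, y (i + 1) = g (x i))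
    (hx' : ∀ i, x' (i + 1) = f (y' i)) (hy' : ∀ i, y' (i + 1) = g (x' i))
    (h1 : x 1 = x' 1 ∧ y 1 = y' 1) : x = x' ∧ y = y' := by
  suffices h : ∀ k, x k = x' k ∧ y k = y' k from
    ⟨funext fun k => (h k).1, funext fun k => (h k).2⟩
  intro k
  induction k using Int.inductionOn' (b := 1) with
  | zero => exact h1
  | succ k _ ih => exact ⟨by rw [hx, hx', ih.2], by rw [hy, hy', ih.1]⟩
  | pred k _ ih =>
    refine ⟨hg ?_, hf ?_⟩
    · rw [← hy, ← hy', sub_add_cancel, ih.2]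
    · rw [← hx, ← hx', sub_add_cancel, ih.1]

/-- With `a = −B(γ,δ)` and `U` the (shifted) Chebyshev polynomials of the
second kind, `γ_k = U_k(a) γ + U_{k−1}(a) δ` and `δ_k = U_{k−1}(a) γ + U_k(a) δ` for all
`k ∈ ℤ`. -/
theorem localRootSeq_eq_chebyshev
    (BF : LinearMap.BilinForm ℝ V) (hsymm : ∀ u v : V, BF u v = BF v u)
    (γ δ : V) (hγ : BF γ γ = 1) (hδ : BF δ δ = 1)
    (gs ds : ℤ → V) (hg1 : gs 1 = γ) (hd1 : ds 1 = δ)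
    (hgrec : ∀ i : ℤ, gs (i + 1) = reflVec BF γ (ds i))
    (hdrec : ∀ i : ℤ, ds (i + 1) = reflVec BF δ (gs i))
    (a : ℝ) (ha : a = - BF γ δ)
    (U : ℤ → ℝ → ℝ) (hU0 : ∀ x : ℝ, U 0 x = 0) (hU1 : ∀ x : ℝ, U 1 x = 1)
    (hUrec : ∀ (n : ℤ) (x : ℝ), U (n + 2) x = 2 * x * U (n + 1) x - U n x) :
    ∀ k : ℤ, gs k = U k a • γ + U (k - 1) a • δ ∧ ds k = U (k - 1) a • γ + U k a • δ := by
  have hγδ : BF γ δ = -a := by rw [ha, neg_neg]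
  have hδγ : BF δ γ = -a := by rw [hsymm, hγδ]
  have hU : ∀ k, U (k + 1) a = 2 * a * U k a - U (k - 1) a := fun k => by
    simpa only [sub_add_cancel, show k - 1 + 2 = k + 1 by ring] using hUrec (k - 1) a
  have hsol := alternating_recursion_unique (reflVec_involutive hγ).injective
    (reflVec_involutive hδ).injective hgrec hdrec
    (x' := fun k => U k a • γ + U (k - 1) a • δ) (y' := fun k => U (k - 1) a • γ + U k a • δ)
    (fun k => by
      rw [reflVec_smul_add_smul hγ hδγ, add_sub_cancel_right, hU])
    (fun k => by
      rw [add_comm (U k a • γ), reflVec_smul_add_smul hδ hγδ, add_sub_cancel_right, hU]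
      exact add_comm _ _)
    (by simp only [sub_self, hU0, hU1, one_smul, zero_smul, add_zero, zero_add, hg1, hd1,
      and_self])
  exact fun k => ⟨congrFun hsol.1 k, congrFun hsol.2 k⟩
end

section
/- For every i ≥ 1 and every j ∈ ℤ, s_{γ_i}(γ_j) = δ_{j − 2i + 1} and s_{δ_i}(δ_j) = γ_{j − 2i + 1}. -/
/-!
Conjugating a reflection by a reflection gives a reflection: `s_{s_γ μ} = s_γ ∘ s_μ ∘ s_γ`.
Since `γ_{i+1} = s_γ δ_i` and `s_γ γ_j = δ_{j-1}`, this turns the claim for `s_{γ_{i+1}}` into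
the claim for `s_{δ_i}` shifted by one, and symmetrically with `γ` and `δ` exchanged; an
induction on `i` starting from `s_γ γ_j = δ_{j-1}` finishes the proof.
-/

variable {V : Type*} [AddCommGroup V] [Module ℝ V]

section Reflection

variable (BF : LinearMap.BilinForm ℝ V)

lemma reflVec_reflVec {μ : V} (hμ : BF μ μ = 1) (v : V) :
    reflVec BF μ (reflVec BF μ v) = v := by
  simp only [reflVec, map_sub, map_smul, LinearMap.sub_apply, LinearMap.smul_apply,
    smul_eq_mul, hμ]
  module

lemma reflVec_sub_smul (μ x y : V) (c : ℝ) :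
    reflVec BF μ (x - c • y) = reflVec BF μ x - c • reflVec BF μ y := by
  simp only [reflVec, map_sub, map_smul, LinearMap.sub_apply, LinearMap.smul_apply,
    smul_eq_mul]
  module

lemma bilin_reflVec_left (hsymm : ∀ u v : V, BF u v = BF v u) (μ u v : V) :
    BF (reflVec BF μ u) v = BF u (reflVec BF μ v) := by
  simp only [reflVec, map_sub, map_smul, LinearMap.sub_apply, LinearMap.smul_apply,
    smul_eq_mul]
  rw [hsymm μ v]
  ring

lemma reflVec_reflVec_eq (hsymm : ∀ u v : V, BF u v = BF v u) {μ₀ : V} (hμ₀ : BF μ₀ μ₀ = 1)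
    (μ v : V) :
    reflVec BF (reflVec BF μ₀ μ) v = reflVec BF μ₀ (reflVec BF μ (reflVec BF μ₀ v)) := by
  conv_rhs => arg 3; rw [reflVec]
  rw [reflVec_sub_smul, reflVec_reflVec BF hμ₀, bilin_reflVec_left BF hsymm, reflVec]

end Reflection

section Sequences

variable (BF : LinearMap.BilinForm ℝ V) {μ : V} {a b : ℤ → V}

lemma reflVec_eq_of_succ (hμ : BF μ μ = 1) (hrec : ∀ i, a (i + 1) = reflVec BF μ (b i))
    (j : ℤ) : reflVec BF μ (a j) = b (j - 1) := by
  rw [← sub_add_cancel j 1, hrec, reflVec_reflVec BF hμ, add_sub_cancel_right]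

lemma reflVec_succ_of_rec (hsymm : ∀ u v : V, BF u v = BF v u) (hμ : BF μ μ = 1)
    (hrec : ∀ i, a (i + 1) = reflVec BF μ (b i)) {i : ℤ}
    (hb : ∀ j, reflVec BF (b i) (b j) = a (j - 2 * i + 1)) (j : ℤ) :
    reflVec BF (a (i + 1)) (a j) = b (j - 2 * (i + 1) + 1) := by
  rw [hrec, reflVec_reflVec_eq BF hsymm hμ, reflVec_eq_of_succ BF hμ hrec, hb,
    reflVec_eq_of_succ BF hμ hrec]
  congr 1; ring

end Sequences

/-- For every `i ≥ 1` and every `j ∈ ℤ`,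
`s_{γ_i}(γ_j) = δ_{j − 2i + 1}` and `s_{δ_i}(δ_j) = γ_{j − 2i + 1}`. -/
theorem reflVec_localRootSeq
    (BF : LinearMap.BilinForm ℝ V) (hsymm : ∀ u v : V, BF u v = BF v u)
    (γ δ : V) (hγ : BF γ γ = 1) (hδ : BF δ δ = 1)
    (gs ds : ℤ → V) (hg1 : gs 1 = γ) (hd1 : ds 1 = δ)
    (hgrec : ∀ i : ℤ, gs (i + 1) = reflVec BF γ (ds i))
    (hdrec : ∀ i : ℤ, ds (i + 1) = reflVec BF δ (gs i)) :
    ∀ i : ℤ, 1 ≤ i → ∀ j : ℤ,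
      reflVec BF (gs i) (gs j) = ds (j - 2 * i + 1) ∧
      reflVec BF (ds i) (ds j) = gs (j - 2 * i + 1) := by
  intro i hi
  induction i, hi using Int.leInduction with
  | base =>
    intro j
    rw [hg1, hd1, reflVec_eq_of_succ BF hγ hgrec, reflVec_eq_of_succ BF hδ hdrec]
    constructor <;> congr 1 <;> ring
  | succ i _ ih =>
    exact fun j => ⟨reflVec_succ_of_rec BF hsymm hγ hgrec (fun j => (ih j).2) j,
      reflVec_succ_of_rec BF hsymm hδ hdrec (fun j => (ih j).1) j⟩
end
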